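/- Let a, b > 0 with a ∉ {1, 2}, and set γ_n^{(2)} := ∑_{l=2}^n C(n,l) λ_{n,l} · (l-1)². Then γ_n^{(2)} ~ n² as n → ∞. -/

import Mathlib

open Polynomial Finset Filter

/-- The beta(a,b) coalescent merger rates
`λ_{m,k} = a^{(k-2)} b^{(m-k)} / (a+b)^{(m-2)}` (rising factorial powers). -/
noncomputable def betaRate (a b : ℝ) (m k : ℕ) : ℝ :=
  (ascPochhammer ℝ (k - 2)).eval a * (ascPochhammer ℝ (m - k)).eval b /
    (ascPochhammer ℝ (m - 2)).eval (a + b)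

/-- `γ_n^{(2)} = ∑_{l=2}^n C(n,l) λ_{n,l} · (l-1)²`. -/
noncomputable def gamma2 (a b : ℝ) (n : ℕ) : ℝ :=
  ∑ l ∈ Finset.Icc 2 n, (n.choose l : ℝ) * betaRate a b n l * ((l : ℝ) - 1) ^ 2

/-!
Multiplied by `(a-1)(a-2)`, the weight `a^{(l-2)} (l-1)²` becomes a combination of
`a^{(l)}`, `(a-1)^{(l)}` and `(a-2)^{(l)}`, so the Chu–Vandermonde identity for rising factorials
sums `γ_n^{(2)}` in closed form:
`(a-1)(a-2) γ_n^{(2)} (a+b)^{(n-2)} = (a-1)(a-2) (a+b)^{(n)} - (2a-1)(a-2) (a+b-1)^{(n)}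
  + (a-1)² (a+b-2)^{(n)} - b^{(n)}`.
After division by `(a+b)^{(n-2)}` the first term is `~ (a-1)(a-2) n²`, the next two are `O(n)`,
and the last is `O(n²) · b^{(n-2)} / (a+b)^{(n-2)} = O(n^{2-a})`, because Euler's limit formula
for `Γ` gives `b^{(n)} / (a+b)^{(n)} ~ Γ(a+b) / Γ(b) · n^{-a}`.
-/

open Topology Real

section Semiring
variable {S : Type*} [CommSemiring S]

theorem ascPochhammer_eval_eq_prod_range (x : S) (n : ℕ) :
    (ascPochhammer S n).eval x = ∏ j ∈ range n, (x + j) := by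
  induction n with
  | zero => simp
  | succ n ih => rw [ascPochhammer_succ_eval, ih, prod_range_succ]

theorem ascPochhammer_succ_eval_left (x : S) (n : ℕ) :
    (ascPochhammer S (n + 1)).eval x = x * (ascPochhammer S n).eval (x + 1) := by
  simp [ascPochhammer_succ_left, eval_comp]

theorem ascPochhammer_add_two_eval (x : S) (n : ℕ) :
    (ascPochhammer S (n + 2)).eval x = (ascPochhammer S n).eval x * (x + n) * (x + n + 1) := by
  rw [ascPochhammer_succ_eval, ascPochhammer_succ_eval]
  push_cast
  ring

end Semiring

section Ring
variable {R : Type*} [CommRing R]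

theorem ascPochhammer_eval_add (x y : R) (n : ℕ) :
    (ascPochhammer R n).eval (x + y) = ∑ k ∈ range (n + 1),
      n.choose k * (ascPochhammer R k).eval x * (ascPochhammer R (n - k)).eval y := by
  have desc_eq (r : R) (k : ℕ) :
      (descPochhammer ℤ k).smeval r = (descPochhammer R k).eval r := by
    rw [descPochhammer_smeval_eq_ascPochhammer, ascPochhammer_smeval_eq_eval,
      descPochhammer_eval_eq_ascPochhammer]
  have asc_eq (r : R) (k : ℕ) :
      (ascPochhammer R k).eval r = (-1) ^ k * (descPochhammer ℤ k).smeval (-r) := by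
    rw [desc_eq, ← ascPochhammer_eval_neg_eq_descPochhammer, neg_neg]
  rw [← Nat.sum_antidiagonal_eq_sum_range_succ (fun i j => (n.choose i : R) *
    (ascPochhammer R i).eval x * (ascPochhammer R j).eval y), asc_eq, neg_add,
    Ring.descPochhammer_smeval_add _ (Commute.all _ _), mul_sum]
  refine sum_congr rfl fun ij hij => ?_
  rw [asc_eq x, asc_eq y, ← mem_antidiagonal.mp hij, pow_add]
  ring

theorem sum_Icc_two_choose_mul_ascPochhammer_eval (x y : R) (n : ℕ) :
    ∑ k ∈ Icc 2 n, n.choose k * (ascPochhammer R k).eval x * (ascPochhammer R (n - k)).eval y =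
      (ascPochhammer R n).eval (x + y) - (ascPochhammer R n).eval y
        - n * x * (ascPochhammer R (n - 1)).eval y := by
  rcases n with _ | n
  · simp
  rw [ascPochhammer_eval_add, range_eq_Ico, sum_eq_sum_Ico_succ_bot (by omega),
    sum_eq_sum_Ico_succ_bot (by omega), Ico_add_one_right_eq_Icc]
  simp

theorem ascPochhammer_add_two_eval_sub_one (x : R) (n : ℕ) :
    (ascPochhammer R (n + 2)).eval (x - 1) = (x - 1) * (ascPochhammer R n).eval x * (x + n) := by
  rw [ascPochhammer_succ_eval_left, sub_add_cancel, ascPochhammer_succ_eval, mul_assoc]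

theorem ascPochhammer_add_two_eval_sub_two (x : R) (n : ℕ) :
    (ascPochhammer R (n + 2)).eval (x - 2) = (x - 2) * (x - 1) * (ascPochhammer R n).eval x := by
  rw [ascPochhammer_succ_eval_left, ascPochhammer_succ_eval_left, show x - 2 + 1 = x - 1 by ring,
    sub_add_cancel, mul_assoc]

theorem ascPochhammer_eval_mul_succ_sq (a : R) (m : ℕ) :
    (a - 1) * (a - 2) * ((ascPochhammer R m).eval a * (m + 1) ^ 2) =
      (a - 1) * (a - 2) * (ascPochhammer R (m + 2)).eval a
        - (2 * a - 1) * (a - 2) * (ascPochhammer R (m + 2)).eval (a - 1)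
        + (a - 1) ^ 2 * (ascPochhammer R (m + 2)).eval (a - 2) := by
  rw [ascPochhammer_add_two_eval, ascPochhammer_add_two_eval_sub_one,
    ascPochhammer_add_two_eval_sub_two]
  ring

end Ring

theorem gamma2_closed_form (a b : ℝ) (hab : 0 < a + b) (n : ℕ) :
    (a - 1) * (a - 2) * gamma2 a b n * (ascPochhammer ℝ (n - 2)).eval (a + b) =
      (a - 1) * (a - 2) * (ascPochhammer ℝ n).eval (a + b)
        - (2 * a - 1) * (a - 2) * (ascPochhammer ℝ n).eval (a + b - 1)
        + (a - 1) ^ 2 * (ascPochhammer ℝ n).eval (a + b - 2)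
        - (ascPochhammer ℝ n).eval b := by
  have hD := (ascPochhammer_pos (n - 2) _ hab).ne'
  have summand (l : ℕ) (hl : l ∈ Icc 2 n) :
      (a - 1) * (a - 2) * ((n.choose l : ℝ) * betaRate a b n l * ((l : ℝ) - 1) ^ 2) *
          (ascPochhammer ℝ (n - 2)).eval (a + b) =
        (a - 1) * (a - 2) * (n.choose l * (ascPochhammer ℝ l).eval a *
            (ascPochhammer ℝ (n - l)).eval b)
          - (2 * a - 1) * (a - 2) * (n.choose l * (ascPochhammer ℝ l).eval (a - 1) *
            (ascPochhammer ℝ (n - l)).eval b)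
          + (a - 1) ^ 2 * (n.choose l * (ascPochhammer ℝ l).eval (a - 2) *
            (ascPochhammer ℝ (n - l)).eval b) := by
    obtain ⟨m, rfl⟩ : ∃ m, l = m + 2 := ⟨l - 2, by grind⟩
    rw [betaRate, Nat.add_sub_cancel]
    field_simp
    push_cast
    linear_combination (n.choose (m + 2) : ℝ) * (ascPochhammer ℝ (n - (m + 2))).eval b *
      ascPochhammer_eval_mul_succ_sq a m
  rw [gamma2, mul_sum, sum_mul, sum_congr rfl summand, sum_add_distrib, sum_sub_distrib,
    ← mul_sum, ← mul_sum, ← mul_sum, sum_Icc_two_choose_mul_ascPochhammer_eval,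
    sum_Icc_two_choose_mul_ascPochhammer_eval, sum_Icc_two_choose_mul_ascPochhammer_eval,
    sub_add_eq_add_sub a 1 b, sub_add_eq_add_sub a 2 b]
  ring

theorem gamma2_add_two_closed_form (a b : ℝ) (hab : 0 < a + b) (m : ℕ) :
    (a - 1) * (a - 2) * gamma2 a b (m + 2) =
      (a - 1) * (a - 2) * (a + b + m) * (a + b + m + 1)
        - (2 * a - 1) * (a - 2) * (a + b - 1) * (a + b + m)
        + (a - 1) ^ 2 * (a + b - 2) * (a + b - 1)
        - (b + m) * (b + m + 1) *
          ((ascPochhammer ℝ m).eval b / (ascPochhammer ℝ m).eval (a + b)) := by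
  have hD := (ascPochhammer_pos m _ hab).ne'
  have h := gamma2_closed_form a b hab (m + 2)
  rw [Nat.add_sub_cancel, ascPochhammer_add_two_eval (a + b), ascPochhammer_add_two_eval b,
    ascPochhammer_add_two_eval_sub_one (a + b), ascPochhammer_add_two_eval_sub_two (a + b)] at h
  field_simp
  linear_combination h

theorem tendsto_ascPochhammer_eval_div_ascPochhammer_eval_add {a b : ℝ} (ha : 0 < a)
    (hb : 0 < b) :
    Tendsto (fun m : ℕ => (ascPochhammer ℝ m).eval b / (ascPochhammer ℝ m).eval (a + b))
      atTop (𝓝 0) := by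
  have hlim : Tendsto (fun n : ℕ => (n : ℝ) ^ (-a) * (GammaSeq (a + b) n / GammaSeq b n))
      atTop (𝓝 (0 * (Gamma (a + b) / Gamma b))) :=
    ((tendsto_rpow_neg_atTop ha).comp tendsto_natCast_atTop_atTop).mul
      ((GammaSeq_tendsto_Gamma _).div (GammaSeq_tendsto_Gamma _) (Gamma_pos_of_pos hb).ne')
  rw [zero_mul] at hlim
  -- `GammaSeq s n = n ^ s * n! / s^{(n+1)}`, hence the shift by one
  rw [← tendsto_add_atTop_iff_nat 1]
  refine hlim.congr' ?_
  filter_upwards [eventually_gt_atTop 0] with n hn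
  have hn' : (0 : ℝ) < n := Nat.cast_pos.mpr hn
  simp only [GammaSeq, ascPochhammer_eval_eq_prod_range]
  rw [rpow_neg hn'.le, rpow_add hn']
  field_simp

theorem tendsto_sub_one_mul_sub_two_mul_gamma2_div_sq {a b : ℝ} (ha : 0 < a) (hb : 0 < b) :
    Tendsto (fun n : ℕ => (a - 1) * (a - 2) * gamma2 a b n / (n : ℝ) ^ 2) atTop
      (𝓝 ((a - 1) * (a - 2))) := by
  have ratio (c : ℝ) : Tendsto (fun m : ℕ => (c + m) / (2 + m : ℝ)) atTop (𝓝 1) := by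
    simpa using tendsto_add_mul_div_add_mul_atTop_nhds c 2 1 one_ne_zero
  have inv : Tendsto (fun m : ℕ => (2 + m : ℝ)⁻¹) atTop (𝓝 0) := by
    simpa using tendsto_add_mul_div_add_mul_atTop_nhds (1 : ℝ) 2 0 one_ne_zero
  have hlim := ((((tendsto_const_nhds (x := (a - 1) * (a - 2))).mul
      ((ratio (a + b)).mul (ratio (a + b + 1)))).sub
    ((tendsto_const_nhds (x := (2 * a - 1) * (a - 2) * (a + b - 1))).mul
      ((ratio (a + b)).mul inv))).add
    ((tendsto_const_nhds (x := (a - 1) ^ 2 * (a + b - 2) * (a + b - 1))).mul (inv.mul inv))).sub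
    (((ratio b).mul (ratio (b + 1))).mul
      (tendsto_ascPochhammer_eval_div_ascPochhammer_eval_add ha hb))
  simp only [mul_one, mul_zero, sub_zero, add_zero] at hlim
  rw [← tendsto_add_atTop_iff_nat 2]
  refine hlim.congr fun m => ?_
  rw [gamma2_add_two_closed_form a b (by positivity) m]
  push_cast
  field_simp
  ring

/-- for `a, b > 0`, `a ∉ {1,2}`, one has `γ_n^{(2)} ~ n²` as `n → ∞`. -/
theorem stmt_10 (a b : ℝ) (ha : 0 < a) (hb : 0 < b) (ha1 : a ≠ 1) (ha2 : a ≠ 2) :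
    Tendsto (fun n : ℕ => gamma2 a b n / (n : ℝ) ^ 2) atTop (nhds 1) := by
  have hc : (a - 1) * (a - 2) ≠ 0 := mul_ne_zero (sub_ne_zero.mpr ha1) (sub_ne_zero.mpr ha2)
  have hlim := (tendsto_sub_one_mul_sub_two_mul_gamma2_div_sq ha hb).div_const ((a - 1) * (a - 2))
  rw [div_self hc] at hlim
  refine hlim.congr fun n => ?_
  field_simp
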